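/- arXiv:2309.02090 — 3 statements merged into one kernel-verified Lean document; each statement's English description precedes it below -/
import Mathlib

section
/- Let G₁, G₂ be groups and φ : G₂ → G₁ a surjective homomorphism. Consider the two-sorted structure C with sorts G₁ and G₂, unary functions F_{1,a}(b) = b·a on G₁ for each a ∈ G₁, F_{2,a}(b) = b·a on G₂ for each a ∈ G₂, and a cross-sort function F(b) = φ(b) from G₂ to G₁. Then Aut(C) ≅ G₂, via c ↦ (left multiplication by c on sort 2, left multiplication by φ(c) on sort 1), and under this isomorphism the restriction map Aut(C) → Aut(sort 1 structure) corresponds to φ. -/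
/-- An automorphism of the two-sorted structure `C` with sorts `G₂`, `G₁`, the right
multiplications as unary functions on each sort, and the cross-sort function
`φ : G₂ → G₁`: a pair of permutations commuting with all these functions. -/
def IsTwoSortedAut {G₁ G₂ : Type*} [Group G₁] [Group G₂] (φ : G₂ →* G₁)
    (p : Equiv.Perm G₂ × Equiv.Perm G₁) : Prop :=
  (∀ a b : G₂, p.1 (b * a) = p.1 b * a) ∧
  (∀ a b : G₁, p.2 (b * a) = p.2 b * a) ∧
  (∀ b : G₂, p.2 (φ b) = φ (p.1 b))

/-- for a surjective homomorphism `φ : G₂ → G₁`, the automorphism group of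
the two-sorted structure `C` (sorts `G₁`, `G₂` with right multiplications and the
cross-sort map `φ`) is isomorphic to `G₂`, via `c ↦` (left multiplication by `c` on sort
2, left multiplication by `φ c` on sort 1); under this isomorphism the restriction map
`Aut(C) → Aut(sort₁)` corresponds to `φ` (identifying `Aut(sort₁)` with `G₁` via left
translations). -/
theorem twoSortedAut_iso (G₁ G₂ : Type*) [Group G₁] [Group G₂]
    (φ : G₂ →* G₁) (hφ : Function.Surjective φ) :
    ∃ θ : G₂ →* Equiv.Perm G₂ × Equiv.Perm G₁,
      Function.Injective θ ∧
      (∀ c : G₂, θ c = (Equiv.mulLeft c, Equiv.mulLeft (φ c))) ∧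
      (∀ c : G₂, IsTwoSortedAut φ (θ c)) ∧
      (∀ p : Equiv.Perm G₂ × Equiv.Perm G₁, IsTwoSortedAut φ p → ∃ c : G₂, p = θ c) ∧
      (∀ c : G₂, (θ c).2 = Equiv.mulLeft (φ c)) := by
  refine ⟨{ toFun := fun c => (Equiv.mulLeft c, Equiv.mulLeft (φ c)),
            map_one' := by simp [Prod.ext_iff],
            map_mul' := fun a b => by
              refine Prod.ext ?_ ?_ <;> ext x <;> simp [mul_assoc] }, ?_, ?_, ?_, ?_, ?_⟩
  · intro a b h
    have := congrArg (fun p => p.1 1) h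
    simpa using this
  · intro c; rfl
  · intro c
    refine ⟨fun a b => ?_, fun a b => ?_, fun b => ?_⟩ <;> simp [mul_assoc]
  · rintro p ⟨h1, h2, h3⟩
    refine ⟨p.1 1, ?_⟩
    have e1 : p.1 = Equiv.mulLeft (p.1 1) := by
      ext b; have := h1 b 1; simpa using this
    have e2 : p.2 = Equiv.mulLeft (φ (p.1 1)) := by
      ext a
      obtain ⟨b, rfl⟩ := hφ a
      have := h3 b
      rw [this, e1]
      simp
    exact Prod.ext e1 e2
  · intro c; rfl
end

section
/- With notation as in the matched-triples setup: for each a ∈ A, the set k(a) = {(π̄, ḡ, b̄) ∈ X : b_s = π_s⁻¹(a) for all s ∈ S} is an E-equivalence class (it is closed under E and any two of its members are E-equivalent). -/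
/-- A triple `(π̄, ḡ, b̄)`: a family of isomorphisms `π_s : A_s ≅ A`, a family of
isomorphisms `g_{s,t} : B_t ≅ B_s`, and a family of elements `b_s ∈ B_s`. -/
structure Triple (S A : Type*) (As Bs : S → Type*) where
  π : ∀ s, As s ≃ A
  g : ∀ s t, Bs t ≃ Bs s
  b : ∀ s, Bs s

/-- A matched triple: the `g_{s,t}` form a commuting family with `g_{s,s} = id`,
extending (via the sort-1 embeddings `i`) the maps `π_s⁻¹ ∘ π_t`, and `g_{s,t}(b_t) = b_s`. -/
def IsMatched {S A : Type*} {As Bs : S → Type*} (i : ∀ s, As s → Bs s)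
    (x : Triple S A As Bs) : Prop :=
  (∀ r s t, ∀ c : Bs t, x.g r s (x.g s t c) = x.g r t c) ∧
  (∀ s, x.g s s = Equiv.refl (Bs s)) ∧
  (∀ s t, ∀ a : As t, x.g s t (i t a) = i s ((x.π s).symm (x.π t a))) ∧
  (∀ s t, x.g s t (x.b t) = x.b s)

/-- The relation `E`: `(π̄₁,ḡ₁,b̄₁) E (π̄₂,ḡ₂,b̄₂)` iff for every `s`, letting
`π̃_s = π₁ₛ⁻¹ ∘ π₂ₛ` and `h_s = ψ_s(π̃_s⁻¹)`, one has `h_s(b₁ₛ) = b₂ₛ`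
(note `π̃_s⁻¹ = π₂ₛ⁻¹ ∘ π₁ₛ`). -/
def Erel {S A : Type*} {As Bs : S → Type*}
    (ψ : ∀ s, Equiv.Perm (As s) →* Equiv.Perm (Bs s))
    (x₁ x₂ : Triple S A As Bs) : Prop :=
  ∀ s, ψ s ((x₁.π s).trans (x₂.π s).symm) (x₁.b s) = x₂.b s

/-- for each `a ∈ A`, the set
`k(a) = {(π̄,ḡ,b̄) matched : b_s = π_s⁻¹(a) for all s}` is an `E`-equivalence class:
it is closed under `E`, and any two of its members are `E`-equivalent. -/
theorem k_is_equivalence_class {S A : Type*} {As Bs : S → Type*}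
    (i : ∀ s, As s → Bs s)
    (ψ : ∀ s, Equiv.Perm (As s) →* Equiv.Perm (Bs s))
    (hψ : ∀ s (g : Equiv.Perm (As s)) (a : As s), ψ s g (i s a) = i s (g a))
    (a : A) :
    (∀ x₁ x₂ : Triple S A As Bs, IsMatched i x₁ → IsMatched i x₂ →
      (∀ s, x₁.b s = i s ((x₁.π s).symm a)) → Erel ψ x₁ x₂ →
      ∀ s, x₂.b s = i s ((x₂.π s).symm a)) ∧
    (∀ x₁ x₂ : Triple S A As Bs, IsMatched i x₁ → IsMatched i x₂ →
      (∀ s, x₁.b s = i s ((x₁.π s).symm a)) →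
      (∀ s, x₂.b s = i s ((x₂.π s).symm a)) → Erel ψ x₁ x₂) := by
  constructor
  · intro x₁ x₂ _ _ hb hE s
    rw [← hE s, hb s, hψ]
    simp
  · intro x₁ x₂ _ _ hb₁ hb₂ s
    rw [hb₁ s, hψ, hb₂ s]
    simp
end

section
/- In the matched-triples setup, given a matched triple x₁ = (π̄₁, ḡ₁, b̄₁), a family of isomorphisms π̄* = ⟨π*_s : A_s ≅ A⟩, and s(*) ∈ S, define g₂_{t,s} = ψ_t(π₁ₜ⁻¹π*ₜ)⁻¹ ∘ g₁_{t,s} ∘ ψ_s(π₁ₛ⁻¹π*ₛ) and b₂ₛ = g₂_{s,s(*)}(ψ_{s(*)}(π₁_{s(*)}⁻¹π*_{s(*)})⁻¹ b₁_{s(*)}). Then x₂ = (π̄*, ḡ₂, b̄₂) is a matched triple E-equivalent to x₁; in particular the family ḡ₂ is again commuting: g₂_{r,s} ∘ g₂_{s,t} = g₂_{r,t} and g₂_{s,s} = id. -/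
/-- Given a matched triple `x₁`, a new family of isomorphisms `π*` and a base index
`s₀ = s(*)`, the modified triple `x₂ = (π̄*, ḡ₂, b̄₂)` with
`g₂_{t,s} = ψ_t(π₁ₜ⁻¹π*ₜ)⁻¹ ∘ g₁_{t,s} ∘ ψ_s(π₁ₛ⁻¹π*ₛ)` and
`b₂ₛ = g₂_{s,s₀}(ψ_{s₀}(π₁_{s₀}⁻¹π*_{s₀})⁻¹ b₁_{s₀})`. -/
def modifiedTriple {S A : Type*} {As Bs : S → Type*}
    (ψ : ∀ s, Equiv.Perm (As s) →* Equiv.Perm (Bs s))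
    (x₁ : Triple S A As Bs) (πs : ∀ s, As s ≃ A) (s₀ : S) : Triple S A As Bs where
  π := πs
  g := fun t s =>
    (ψ s ((πs s).trans (x₁.π s).symm)).trans
      ((x₁.g t s).trans (ψ t ((πs t).trans (x₁.π t).symm)).symm)
  b := fun s =>
    ((ψ s₀ ((πs s₀).trans (x₁.π s₀).symm)).trans
      ((x₁.g s s₀).trans (ψ s ((πs s).trans (x₁.π s).symm)).symm))
      ((ψ s₀ ((πs s₀).trans (x₁.π s₀).symm)).symm (x₁.b s₀))

/-- the modified triple `x₂ = (π̄*, ḡ₂, b̄₂)` is again a matched triple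
(in particular `ḡ₂` is a commuting family with `g₂_{s,s} = id`), and it is
`E`-equivalent to `x₁`. -/
theorem modifiedTriple_matched_and_equivalent {S A : Type*} {As Bs : S → Type*}
    (i : ∀ s, As s → Bs s)
    (ψ : ∀ s, Equiv.Perm (As s) →* Equiv.Perm (Bs s))
    (hψ : ∀ s (g : Equiv.Perm (As s)) (a : As s), ψ s g (i s a) = i s (g a))
    (x₁ : Triple S A As Bs) (hx₁ : IsMatched i x₁)
    (πs : ∀ s, As s ≃ A) (s₀ : S) :
    IsMatched i (modifiedTriple ψ x₁ πs s₀) ∧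
      Erel ψ x₁ (modifiedTriple ψ x₁ πs s₀) := by
  obtain ⟨hcom, hid, hext, hb⟩ := hx₁
  have hsymm : ∀ s (σ : Equiv.Perm (As s)) (c : Bs s),
      (ψ s σ).symm c = ψ s σ⁻¹ c := by
    intro s σ c
    rw [map_inv]; rfl
  have hψ' : ∀ s (σ : Equiv.Perm (As s)) (a : As s),
      (ψ s σ).symm (i s a) = i s (σ.symm a) := by
    intro s σ a
    rw [hsymm, hψ]; rfl
  refine ⟨⟨?_, ?_, ?_, ?_⟩, ?_⟩
  · intro r s t c
    simp [modifiedTriple, hcom]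
  · intro s
    ext c
    simp [modifiedTriple, hid]
  · intro s t a
    simp only [modifiedTriple, Equiv.trans_apply, hψ, hext, hψ']
    simp
  · intro s t
    simp only [modifiedTriple, Equiv.trans_apply, Equiv.apply_symm_apply, hcom]
  · intro s
    simp only [modifiedTriple, Equiv.trans_apply, Equiv.apply_symm_apply, hb]
    rw [show (x₁.π s).trans (πs s).symm = ((πs s).trans (x₁.π s).symm)⁻¹ from
      Equiv.ext fun _ => rfl, map_inv]
    rfl
end
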